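/- arXiv:0912.3989 — 5 statements merged into one kernel-verified Lean document; each statement's English description precedes it below -/
import Mathlib

section
/- Let Ω be an N×N real diagonal matrix with positive diagonal entries. Let A be an N×N real matrix that is Ω-antisymmetric (AᵀΩ + ΩA = 0) and null-row (A·𝟙 = 0), and let F be an N×N real matrix that is antisymmetric (Fᵀ = −F) and null-row (F·𝟙 = 0). Define the discrete Lie derivative L_A F = ι_A(dF) + d(ι_A F), where (dF)_{ikj} = F_{ik} + F_{kj} + F_{ji}, (ι_A dF)_{ij} = Σ_k ((dF)_{ikj} A_{ik} − (dF)_{jki} A_{jk}), (ι_A F)_i = (AFᵀ)_{ii}, and (dφ)_{ij} = φ_j − φ_i for a vector φ. Then L_A F = [A, FΩ]Ω⁻¹ = AF − (AF)ᵀ. -/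
open Matrix BigOperators

namespace Matrix

variable {n R : Type*} [Fintype n] [CommRing R]

/-- `L_A F = ι_A (dF) + d (ι_A F)`, written out entrywise. -/
def cartanLieDeriv (A F : Matrix n n R) : Matrix n n R :=
  of fun i j =>
    (∑ k, ((F i k + F k j + F j i) * A i k - (F j k + F k i + F i j) * A j k))
      + ((A * Fᵀ) j j - (A * Fᵀ) i i)

/-- For a null-row `A`, the terms `F j i * ∑ k, A i k` vanish and the contraction terms cancel
the diagonal ones, leaving `(A F)ᵢⱼ - (A F)ⱼᵢ`. -/
theorem cartanLieDeriv_eq_mul_sub_transpose {A : Matrix n n R} (hA : A *ᵥ 1 = 0)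
    (F : Matrix n n R) : cartanLieDeriv A F = A * F - (A * F)ᵀ := by
  have hrow : ∀ i, ∑ k, A i k = 0 := fun i => by
    simpa [mulVec, dotProduct] using congrFun hA i
  ext i j
  simp only [cartanLieDeriv, of_apply, sub_apply, transpose_apply, mul_apply, add_mul,
    Finset.sum_add_distrib, Finset.sum_sub_distrib, ← Finset.mul_sum, hrow, mul_zero]
  simp only [mul_comm (F _ _) (A _ _)]
  ring

variable [DecidableEq n]

theorem transpose_mul_eq_mul_conj {A F Ω : Matrix n n R} (hΩ : IsUnit Ω.det)
    (hA : Aᵀ * Ω + Ω * A = 0) (hF : Fᵀ = -F) : (A * F)ᵀ = F * Ω * A * Ω⁻¹ := by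
  have hAT : Aᵀ = -(Ω * A * Ω⁻¹) := by
    rw [← neg_mul, ← eq_neg_of_add_eq_zero_left hA, mul_assoc, mul_nonsing_inv _ hΩ, mul_one]
  rw [transpose_mul, hF, hAT]
  simp only [neg_mul_neg, mul_assoc]

theorem mul_sub_transpose_eq_commutator_mul_inv {A F Ω : Matrix n n R} (hΩ : IsUnit Ω.det)
    (hA : Aᵀ * Ω + Ω * A = 0) (hF : Fᵀ = -F) :
    A * F - (A * F)ᵀ = (A * (F * Ω) - (F * Ω) * A) * Ω⁻¹ := by
  rw [transpose_mul_eq_mul_conj hΩ hA hF, sub_mul]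
  simp only [mul_assoc, mul_nonsing_inv _ hΩ, mul_one]

end Matrix

theorem discrete_lie_derivative_formula_general (N : ℕ) (d : Fin N → ℝ) (hd : ∀ i, 0 < d i)
    (A F : Matrix (Fin N) (Fin N) ℝ)
    (hAΩ : Aᵀ * Matrix.diagonal d + Matrix.diagonal d * A = 0)
    (hA1 : A *ᵥ (1 : Fin N → ℝ) = 0)
    (hF : Fᵀ = -F) :
    (Matrix.of fun i j =>
        -- ι_A (dF) with (dF)_{ikj} = F_{ik} + F_{kj} + F_{ji}
        (∑ k, ((F i k + F k j + F j i) * A i k - (F j k + F k i + F i j) * A j k))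
        -- + d(ι_A F) with (ι_A F)_i = (AFᵀ)_{ii}
        + ((A * Fᵀ) j j - (A * Fᵀ) i i))
      = (A * (F * Matrix.diagonal d) - (F * Matrix.diagonal d) * A)
          * (Matrix.diagonal d)⁻¹ ∧
    (Matrix.of fun i j =>
        (∑ k, ((F i k + F k j + F j i) * A i k - (F j k + F k i + F i j) * A j k))
        + ((A * Fᵀ) j j - (A * Fᵀ) i i))
      = A * F - (A * F)ᵀ := by
  have hΩ : IsUnit (diagonal d).det := (isUnit_iff_isUnit_det _).mp <|
    isUnit_diagonal.mpr <| Pi.isUnit_iff.mpr fun i => (hd i).ne'.isUnit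
  have hL : cartanLieDeriv A F = A * F - (A * F)ᵀ := cartanLieDeriv_eq_mul_sub_transpose hA1 F
  exact ⟨hL.trans (mul_sub_transpose_eq_commutator_mul_inv hΩ hAΩ hF), hL⟩

/-- **Discrete Lie derivative formula.** For an `Ω`-antisymmetric null-row matrix `A`
(a discrete divergence-free vector field) and an antisymmetric null-row matrix `F`
(a discrete one-form), the discrete Lie derivative defined via Cartan's formula
`L_A F = ι_A(dF) + d(ι_A F)` equals `[A, FΩ]Ω⁻¹ = AF − (AF)ᵀ`. -/
theorem discrete_lie_derivative_formula (N : ℕ) (d : Fin N → ℝ) (hd : ∀ i, 0 < d i)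
    (A F : Matrix (Fin N) (Fin N) ℝ)
    (hAΩ : Aᵀ * Matrix.diagonal d + Matrix.diagonal d * A = 0)
    (hA1 : A *ᵥ (1 : Fin N → ℝ) = 0)
    (hF : Fᵀ = -F)
    (hF1 : F *ᵥ (1 : Fin N → ℝ) = 0) :
    (Matrix.of fun i j =>
        -- ι_A (dF) with (dF)_{ikj} = F_{ik} + F_{kj} + F_{ji}
        (∑ k, ((F i k + F k j + F j i) * A i k - (F j k + F k i + F i j) * A j k))
        -- + d(ι_A F) with (ι_A F)_i = (AFᵀ)_{ii}
        + ((A * Fᵀ) j j - (A * Fᵀ) i i))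
      = (A * (F * Matrix.diagonal d) - (F * Matrix.diagonal d) * A)
          * (Matrix.diagonal d)⁻¹ ∧
    (Matrix.of fun i j =>
        (∑ k, ((F i k + F k j + F j i) * A i k - (F j k + F k i + F i j) * A j k))
        + ((A * Fᵀ) j j - (A * Fᵀ) i i))
      = A * F - (A * F)ᵀ :=
  discrete_lie_derivative_formula_general N d hd A F hAΩ hA1 hF
end

section
/- Let Ω be an N×N real diagonal matrix with positive diagonal entries. Let F be a 3-tensor F : {1,…,N}³ → ℝ that is totally antisymmetric (antisymmetric under interchange of any two indices), let A be any N×N real matrix, and let B be an Ω-antisymmetric N×N real matrix (BᵀΩ + ΩB = 0). Define the contraction (ι_A F)_{ij} = Σ_k (F_{ikj} A_{ik} − F_{jki} A_{jk}), the pairing ⟨⟨G, B⟩⟩ = Tr(Ω B Gᵀ) for matrices G, and the total pairing ⟨⟨F, A, B⟩⟩ = 2 Σ_{i,j,k} Ω_i F_{ijk} A_{ij} B_{ik}. Then ⟨⟨ι_A F, B⟩⟩ = ⟨⟨F, A, B⟩⟩. -/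
/-!
The contraction is `(ι_A F)_{ij} = f_{ij} - f_{ji}` with `f_{ij} = ∑_k F_{ikj} A_{ik}`.
Since `Ω B` is antisymmetric, pairing `B` with the transpose of `f` gives minus its pairing
with `f`, so `⟨⟨ι_A F, B⟩⟩ = 2 ∑_{i,j} Ω_i B_{ij} f_{ij}`, which is the total pairing after
renaming the summation indices.
-/

open Matrix

namespace Matrix

variable {n R : Type*} [Fintype n] [CommRing R]

theorem isSkewAdjoint_of_transpose_mul_add_mul_eq_zero {J B : Matrix n n R}
    (h : Bᵀ * J + J * B = 0) : Matrix.IsSkewAdjoint J B := by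
  rw [Matrix.IsSkewAdjoint, IsAdjointPair, mul_neg, eq_neg_iff_add_eq_zero, h]

variable [DecidableEq n]

theorem trace_diagonal_mul_mul_transpose (d : n → R) (B G : Matrix n n R) :
    trace (diagonal d * B * Gᵀ) = ∑ i, ∑ j, d i * B i j * G i j := by
  simp only [trace, diag, mul_apply, transpose_apply, diagonal_apply, ite_mul, zero_mul,
    Finset.sum_ite_eq, Finset.mem_univ, if_true]

namespace IsSkewAdjoint

variable {d : n → R} {B : Matrix n n R}

theorem diagonal_mul_apply (hB : Matrix.IsSkewAdjoint (diagonal d) B) (i j : n) :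
    d i * B i j = -(d j * B j i) := by
  have h := congrFun (congrFun hB j) i
  simp only [transpose_apply, mul_diagonal, diagonal_mul, neg_apply] at h
  rw [mul_comm, h, mul_neg]

theorem sum_diagonal_mul_swap (hB : Matrix.IsSkewAdjoint (diagonal d) B) (f : n → n → R) :
    ∑ i, ∑ j, d i * B i j * f j i = -∑ i, ∑ j, d i * B i j * f i j := by
  calc ∑ i, ∑ j, d i * B i j * f j i = ∑ i, ∑ j, -(d j * B j i * f j i) := by
        refine Finset.sum_congr rfl fun i _ => Finset.sum_congr rfl fun j _ => ?_
        rw [hB.diagonal_mul_apply, neg_mul]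
    _ = -∑ j, ∑ i, d j * B j i * f j i := by
        rw [Finset.sum_comm]; simp only [Finset.sum_neg_distrib]

theorem sum_diagonal_mul_sub_swap (hB : Matrix.IsSkewAdjoint (diagonal d) B)
    (f : n → n → R) :
    ∑ i, ∑ j, d i * B i j * (f i j - f j i) = 2 * ∑ i, ∑ j, d i * B i j * f i j := by
  simp only [mul_sub, Finset.sum_sub_distrib]
  rw [hB.sum_diagonal_mul_swap f]
  ring

end IsSkewAdjoint

end Matrix

theorem contraction_pairing_general (N : ℕ) (d : Fin N → ℝ)
    (F : Fin N → Fin N → Fin N → ℝ)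
    (A B : Matrix (Fin N) (Fin N) ℝ)
    (hB : Bᵀ * Matrix.diagonal d + Matrix.diagonal d * B = 0) :
    Matrix.trace
        (Matrix.diagonal d * B *
          (Matrix.of fun i j => ∑ k, (F i k j * A i k - F j k i * A j k))ᵀ)
      = 2 * ∑ i, ∑ j, ∑ k, d i * F i j k * A i j * B i k := by
  have hskew := isSkewAdjoint_of_transpose_mul_add_mul_eq_zero hB
  calc _ = ∑ i, ∑ j, d i * B i j *
          ((∑ k, F i k j * A i k) - ∑ k, F j k i * A j k) := by
        rw [trace_diagonal_mul_mul_transpose]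
        simp only [of_apply, Finset.sum_sub_distrib]
    _ = 2 * ∑ i, ∑ j, d i * B i j * ∑ k, F i k j * A i k :=
        hskew.sum_diagonal_mul_sub_swap fun i j => ∑ k, F i k j * A i k
    _ = _ := by
        congr 1
        refine Finset.sum_congr rfl fun i _ => ?_
        rw [Finset.sum_comm]
        simp only [Finset.mul_sum]
        exact Finset.sum_congr rfl fun j _ => Finset.sum_congr rfl fun k _ => by ring

/-- **Contraction–pairing compatibility.** For a totally antisymmetric 3-tensor `F`
(a discrete 2-form), any matrix `A` and an `Ω`-antisymmetric matrix `B`, the pairing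
of the contraction `ι_A F` with `B` equals the total pairing of `F` with `A` and `B`:
`⟨⟨ι_A F, B⟩⟩ = ⟨⟨F, A, B⟩⟩`. -/
theorem contraction_pairing (N : ℕ) (d : Fin N → ℝ) (hd : ∀ i, 0 < d i)
    (F : Fin N → Fin N → Fin N → ℝ)
    (hF12 : ∀ i j k, F i j k = -F j i k)
    (hF23 : ∀ i j k, F i j k = -F i k j)
    (hF13 : ∀ i j k, F i j k = -F k j i)
    (A B : Matrix (Fin N) (Fin N) ℝ)
    (hB : Bᵀ * Matrix.diagonal d + Matrix.diagonal d * B = 0) :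
    Matrix.trace
        (Matrix.diagonal d * B *
          (Matrix.of fun i j => ∑ k, (F i k j * A i k - F j k i * A j k))ᵀ)
      = 2 * ∑ i, ∑ j, ∑ k, d i * F i j k * A i j * B i k :=
  contraction_pairing_general N d F A B hB
end

section
/- Let Ω be an N×N real diagonal matrix with positive diagonal entries. Let F be an N×N real matrix that is antisymmetric (Fᵀ = −F) and null-row (F·𝟙 = 0), and let B and C be N×N real matrices that are each Ω-antisymmetric and null-row. Then ⟨⟨dF, B, C⟩⟩ = −⟨⟨F, [B,C]⟩⟩, where (dF)_{ijk} = F_{ij} + F_{jk} + F_{ki}, ⟨⟨dF, B, C⟩⟩ = 2 Σ_{i,j,k} Ω_i (dF)_{ijk} B_{ij} C_{ik}, [B,C] = BC − CB, and ⟨⟨F, [B,C]⟩⟩ = Tr(Ω [B,C] Fᵀ). -/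
/-
Of the three terms of `dF`, those in `F i j` and `F k i` drop out because the rows of `C`,
respectively `B`, sum to zero, so the left side is `2 Tr(Ω B F Cᵀ)`. Moving the weight `Ω` across
`B` by its `Ω`-antisymmetry turns this trace into `-Tr(Ω B C Fᵀ)`; moving it across `C`, together
with `Fᵀ = -F`, turns it into `Tr(Ω C B Fᵀ)`. The two halves of the factor `2` thus produce the
two terms of the commutator.
-/

open Matrix

namespace Matrix

variable {n R : Type*} [Fintype n] [CommRing R]

theorem sum_eq_zero_of_mulVec_one_eq_zero {B : Matrix n n R} (hB : B *ᵥ 1 = 0) (i : n) :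
    ∑ j, B i j = 0 := by
  simpa [mulVec, dotProduct_one] using congrFun hB i

theorem sum_sum_exteriorDeriv_mul_mul_eq_mul_mul_transpose {F B C : Matrix n n R}
    (hB : B *ᵥ 1 = 0) (hC : C *ᵥ 1 = 0) (i : n) :
    ∑ j, ∑ k, (F i j + F j k + F k i) * B i j * C i k = (B * F * Cᵀ) i i := by
  have hFij : ∑ j, ∑ k, F i j * B i j * C i k = 0 :=
    Finset.sum_eq_zero fun j _ => by
      rw [← Finset.mul_sum, sum_eq_zero_of_mulVec_one_eq_zero hC, mul_zero]
  have hFki : ∑ j, ∑ k, F k i * B i j * C i k = 0 := by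
    rw [Finset.sum_comm]
    refine Finset.sum_eq_zero fun k _ => ?_
    rw [← Finset.sum_mul, ← Finset.mul_sum, sum_eq_zero_of_mulVec_one_eq_zero hB, mul_zero,
      zero_mul]
  have hFjk : ∑ j, ∑ k, F j k * B i j * C i k = (B * F * Cᵀ) i i := by
    simp only [mul_apply, transpose_apply, Finset.sum_mul]
    rw [Finset.sum_comm]
    exact Finset.sum_congr rfl fun _ _ => Finset.sum_congr rfl fun _ _ => by ring
  simp only [add_mul, Finset.sum_add_distrib, hFij, hFki, hFjk, zero_add, add_zero]

theorem sum_weighted_exteriorDeriv_mul_mul_eq_trace [DecidableEq n] {F B C : Matrix n n R}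
    (hB : B *ᵥ 1 = 0) (hC : C *ᵥ 1 = 0) (d : n → R) :
    ∑ i, ∑ j, ∑ k, d i * (F i j + F j k + F k i) * B i j * C i k
      = trace (diagonal d * B * F * Cᵀ) := by
  have htrace : trace (diagonal d * B * F * Cᵀ) = ∑ i, d i * (B * F * Cᵀ) i i := by
    simp only [trace, diag, Matrix.mul_assoc, diagonal_mul]
  rw [htrace]
  refine Finset.sum_congr rfl fun i _ => ?_
  rw [← sum_sum_exteriorDeriv_mul_mul_eq_mul_mul_transpose hB hC, Finset.mul_sum]
  exact Finset.sum_congr rfl fun j _ => by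
    rw [Finset.mul_sum]
    exact Finset.sum_congr rfl fun k _ => by ring

theorem trace_mul_mul_mul_transpose_eq_neg_of_antisymm {D B : Matrix n n R} (hD : Dᵀ = D)
    (hB : Bᵀ * D + D * B = 0) (F C : Matrix n n R) :
    trace (D * B * F * Cᵀ) = -trace (D * B * C * Fᵀ) := by
  have hBD : Bᵀ * D = -(D * B) := eq_neg_of_add_eq_zero_left hB
  calc trace (D * B * F * Cᵀ) = trace (C * Fᵀ * (Bᵀ * D)) := by
        rw [← trace_transpose]
        simp only [transpose_mul, transpose_transpose, hD, Matrix.mul_assoc]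
    _ = -trace (D * B * C * Fᵀ) := by
        rw [hBD, Matrix.mul_neg, trace_neg, trace_mul_comm, Matrix.mul_assoc]
        simp only [Matrix.mul_assoc]

theorem trace_mul_mul_mul_transpose_eq_of_antisymm {D C F : Matrix n n R}
    (hC : Cᵀ * D + D * C = 0) (hF : Fᵀ = -F) (B : Matrix n n R) :
    trace (D * B * F * Cᵀ) = trace (D * C * B * Fᵀ) := by
  have hCD : Cᵀ * D = -(D * C) := eq_neg_of_add_eq_zero_left hC
  calc trace (D * B * F * Cᵀ) = trace (Cᵀ * D * B * F) := by
        rw [trace_mul_comm]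
        simp only [Matrix.mul_assoc]
    _ = trace (D * C * B * Fᵀ) := by
        rw [hCD, hF]
        simp only [Matrix.neg_mul, Matrix.mul_neg]

end Matrix

theorem pairing_d_with_commutator_general (N : ℕ) (d : Fin N → ℝ)
    (F B C : Matrix (Fin N) (Fin N) ℝ)
    (hF : Fᵀ = -F)
    (hBΩ : Bᵀ * Matrix.diagonal d + Matrix.diagonal d * B = 0)
    (hB1 : B *ᵥ (1 : Fin N → ℝ) = 0)
    (hCΩ : Cᵀ * Matrix.diagonal d + Matrix.diagonal d * C = 0)
    (hC1 : C *ᵥ (1 : Fin N → ℝ) = 0) :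
    2 * ∑ i, ∑ j, ∑ k, d i * (F i j + F j k + F k i) * B i j * C i k
      = -Matrix.trace (Matrix.diagonal d * (B * C - C * B) * Fᵀ) := by
  rw [sum_weighted_exteriorDeriv_mul_mul_eq_trace hB1 hC1, two_mul]
  nth_rw 1 [trace_mul_mul_mul_transpose_eq_neg_of_antisymm (diagonal_transpose d) hBΩ]
  rw [trace_mul_mul_mul_transpose_eq_of_antisymm hCΩ hF]
  simp only [Matrix.mul_sub, Matrix.sub_mul, trace_sub, Matrix.mul_assoc]
  ring

/-- **Key identity for the flat operator.** For an antisymmetric null-row matrix `F`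
(a discrete one-form) and `Ω`-antisymmetric null-row matrices `B`, `C` (discrete
divergence-free vector fields), one has `⟨⟨dF, B, C⟩⟩ = −⟨⟨F, [B,C]⟩⟩`, the discrete
analogue of `∫ dv♭(u,w) = −∫ (v, [u,w])`. -/
theorem pairing_d_with_commutator (N : ℕ) (d : Fin N → ℝ) (hd : ∀ i, 0 < d i)
    (F B C : Matrix (Fin N) (Fin N) ℝ)
    (hF : Fᵀ = -F)
    (hF1 : F *ᵥ (1 : Fin N → ℝ) = 0)
    (hBΩ : Bᵀ * Matrix.diagonal d + Matrix.diagonal d * B = 0)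
    (hB1 : B *ᵥ (1 : Fin N → ℝ) = 0)
    (hCΩ : Cᵀ * Matrix.diagonal d + Matrix.diagonal d * C = 0)
    (hC1 : C *ᵥ (1 : Fin N → ℝ) = 0) :
    2 * ∑ i, ∑ j, ∑ k, d i * (F i j + F j k + F k i) * B i j * C i k
      = -Matrix.trace (Matrix.diagonal d * (B * C - C * B) * Fᵀ) :=
  pairing_d_with_commutator_general N d F B C hF hBΩ hB1 hCΩ hC1
end

section
/- Let G be a connected simple graph on the vertex set {1,…,N} and let Z be an antisymmetric N×N real matrix (Zᵀ = −Z). Suppose that Tr(Z Yᵀ) = 0 for every N×N real matrix Y that is antisymmetric (Yᵀ = −Y), has all row sums zero (Y·𝟙 = 0), and satisfies Y_{ij} = 0 whenever i ≠ j and i, j are not adjacent in G. Then there exists a discrete pressure field p ∈ ℝᴺ such that Z_{ij} = p_j − p_i for every pair of adjacent vertices i, j. -/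
/-!
For a closed walk `w`, the matrix `Y_w = ∑_{(a,b) ∈ w} (E_ab - E_ba)` is antisymmetric, has zero
row sums (each vertex is entered as often as it is left) and is supported on edges, so it is an
admissible test matrix. Since `Tr(Z Y_wᵀ)` is twice the sum of the antisymmetric `Z` along `w`,
`Z` sums to zero around every closed walk; on a connected graph the pressure is then obtained by
summing `Z` along a walk from a fixed base vertex.
-/

open Matrix

namespace SimpleGraph.Walk

variable {V : Type*} {G : SimpleGraph V}

section walkSum

variable {A : Type*} [AddCommGroup A]

def walkSum (Z : Matrix V V A) {u v : V} (w : G.Walk u v) : A :=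
  (w.darts.map fun d => Z d.fst d.snd).sum

variable (Z : Matrix V V A)

@[simp]
lemma walkSum_nil {u : V} : (nil : G.Walk u u).walkSum Z = 0 := rfl

@[simp]
lemma walkSum_cons {u v w : V} (h : G.Adj u v) (p : G.Walk v w) :
    (cons h p).walkSum Z = Z u v + p.walkSum Z := rfl

@[simp]
lemma walkSum_append {u v w : V} (p : G.Walk u v) (q : G.Walk v w) :
    (p.append q).walkSum Z = p.walkSum Z + q.walkSum Z := by
  simp [walkSum, darts_append]

@[simp]
lemma walkSum_neg {u v : V} (w : G.Walk u v) : w.walkSum (-Z) = -w.walkSum Z := by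
  induction w with
  | nil => simp
  | cons h p ih => simp [ih, add_comm]

end walkSum

section walkMatrix

variable (R : Type*) [CommRing R] [DecidableEq V]

def walkMatrix {u v : V} (w : G.Walk u v) : Matrix V V R :=
  (w.darts.map fun d => single d.fst d.snd 1 - single d.snd d.fst 1).sum

@[simp]
lemma walkMatrix_nil {u : V} : (nil : G.Walk u u).walkMatrix R = 0 := rfl

@[simp]
lemma walkMatrix_cons {u v w : V} (h : G.Adj u v) (p : G.Walk v w) :
    (cons h p).walkMatrix R = single u v 1 - single v u 1 + p.walkMatrix R := rfl

variable {R}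

lemma transpose_walkMatrix {u v : V} (w : G.Walk u v) :
    (w.walkMatrix R)ᵀ = -w.walkMatrix R := by
  induction w with
  | nil => simp
  | cons h p ih =>
    simp only [walkMatrix_cons, transpose_add, transpose_sub, transpose_single, ih]
    abel

lemma walkMatrix_apply_of_not_adj {u v i j : V} (w : G.Walk u v) (hij : ¬G.Adj i j) :
    w.walkMatrix R i j = 0 := by
  induction w with
  | nil => rfl
  | cons h p ih =>
    have off_edge : ∀ {a b}, G.Adj a b → ¬(a = i ∧ b = j) := by
      rintro a b hab ⟨rfl, rfl⟩
      exact hij hab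
    simp [ih, off_edge h, off_edge h.symm]

variable [Fintype V]

lemma walkMatrix_mulVec_one {u v : V} (w : G.Walk u v) :
    w.walkMatrix R *ᵥ 1 = Pi.single u 1 - Pi.single v 1 := by
  induction w with
  | nil => simp
  | cons h p ih =>
    rw [walkMatrix_cons, add_mulVec, sub_mulVec, single_mulVec, single_mulVec, ih]
    simp only [Pi.one_apply, mul_one]
    exact sub_add_sub_cancel _ _ _

lemma trace_mul_transpose_walkMatrix (Z : Matrix V V R) {u v : V} (w : G.Walk u v) :
    trace (Z * (w.walkMatrix R)ᵀ) = w.walkSum Z - w.walkSum Zᵀ := by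
  induction w with
  | nil => simp
  | cons h p ih =>
    simp only [walkMatrix_cons, transpose_add, transpose_sub, transpose_single, mul_add,
      mul_sub, trace_add, trace_sub, trace_mul_single, MulOpposite.op_one, one_smul, ih,
      walkSum_cons, transpose_apply]
    abel

end walkMatrix

end SimpleGraph.Walk

open SimpleGraph Walk

theorem SimpleGraph.Connected.exists_potential_of_walkSum_eq_zero {V A : Type*}
    [AddCommGroup A] {G : SimpleGraph V} (hG : G.Connected) (Z : Matrix V V A)
    (hZ : ∀ (u : V) (w : G.Walk u u), w.walkSum Z = 0) :
    ∃ p : V → A, ∀ i j, G.Adj i j → Z i j = p j - p i := by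
  obtain ⟨v₀⟩ := hG.nonempty
  let path (v : V) : G.Walk v₀ v := (hG v₀ v).some
  refine ⟨fun v => (path v).walkSum Z, fun i j hij => ?_⟩
  have around := hZ _ ((path i).append (cons hij (path j).reverse))
  -- reversing a walk negates its sum, since a walk followed by its reverse is closed
  have back := hZ _ ((path j).append (path j).reverse)
  simp only [walkSum_append, walkSum_cons] at around back
  rw [← sub_eq_zero]
  calc _ = (path i).walkSum Z + (Z i j + (path j).reverse.walkSum Z)
        - ((path j).walkSum Z + (path j).reverse.walkSum Z) := by abel
    _ = 0 := by rw [around, back, sub_zero]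

/-- **Pressure lemma.** Let `G` be a connected simple graph on `{1,…,N}` and `Z` an
antisymmetric matrix such that `Tr(Z Yᵀ) = 0` for every antisymmetric null-row matrix
`Y` supported on adjacent pairs of `G`. Then there exists a discrete pressure field
`p` with `Z_{ij} = p_j − p_i` on every edge of `G`. -/
theorem pressure_lemma (N : ℕ) (G : SimpleGraph (Fin N)) (hG : G.Connected)
    (Z : Matrix (Fin N) (Fin N) ℝ) (hZ : Zᵀ = -Z)
    (horth : ∀ Y : Matrix (Fin N) (Fin N) ℝ, Yᵀ = -Y →
      Y *ᵥ (1 : Fin N → ℝ) = 0 →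
      (∀ i j, i ≠ j → ¬G.Adj i j → Y i j = 0) →
      Matrix.trace (Z * Yᵀ) = 0) :
    ∃ p : Fin N → ℝ, ∀ i j, G.Adj i j → Z i j = p j - p i := by
  refine hG.exists_potential_of_walkSum_eq_zero Z fun u w => ?_
  have h := horth (w.walkMatrix ℝ) (transpose_walkMatrix w)
    (by rw [walkMatrix_mulVec_one, sub_self])
    fun i j _ hij => walkMatrix_apply_of_not_adj w hij
  rw [trace_mul_transpose_walkMatrix, hZ, walkSum_neg, sub_neg_eq_add, ← two_mul] at h
  exact (mul_eq_zero.mp h).resolve_left two_ne_zero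
end

section
/- Let Ω be an N×N real diagonal matrix with positive diagonal entries and let G be a connected simple graph on {1,…,N}. Let S be the set of N×N real matrices that are Ω-antisymmetric, null-row, and supported on adjacent pairs of G. Let A : ℝ → Matrix (N×N, ℝ) with A(t) ∈ S for all t, and let A♭ : ℝ → Matrix (N×N, ℝ) be a differentiable curve of antisymmetric matrices. Suppose that for every t and every B ∈ S, Tr((dA♭/dt(t)·Ω + [A(t), A♭(t)Ω])·B) = 0, where [X,Y] = XY − YX. Then for every t there exists a discrete pressure p ∈ ℝᴺ such that for every pair of adjacent vertices i, j: (dA♭/dt(t) + [A(t), A♭(t)Ω]Ω⁻¹)_{ij} + (p_j − p_i) = 0. -/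
/-! Put `C = Ȧ♭ + [A, A♭Ω]Ω⁻¹`. Both `A` and `A♭Ω` lie in the Lie algebra of `Ω`-skew-adjoint
matrices, hence so does their commutator, and right multiplication by `Ω⁻¹` turns `Ω`-skew-adjoint
matrices into antisymmetric ones; with `Ȧ♭` antisymmetric, so is `C`. As `B ↦ ΩB` identifies `S`
with the antisymmetric divergence-free flows `f` on the edges of `G`, the Euler–Lagrange condition
reads `Tr(C f) = 0` for all such `f`. The discrete gradient and divergence are adjoint, so the
gradients of potentials are exactly the orthogonal complement of the divergence-free flows, and
`C` is a gradient `p_i - p_j` on the edges. -/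

open Matrix

namespace Matrix

variable {n R : Type*} [Fintype n] [CommRing R] {Ω : Matrix n n R}

theorem isSkewAdjoint_iff_transpose_mul_add_mul_eq_zero {M : Matrix n n R} :
    Ω.IsSkewAdjoint M ↔ Mᵀ * Ω + Ω * M = 0 := by
  rw [Matrix.IsSkewAdjoint, IsAdjointPair, mul_neg, ← sub_eq_zero, sub_neg_eq_add]

theorem isSkewAdjoint_mul_of_transpose_eq_neg (hΩ : Ωᵀ = Ω) {Y : Matrix n n R} (hY : Yᵀ = -Y) :
    Ω.IsSkewAdjoint (Y * Ω) := by
  rw [Matrix.IsSkewAdjoint, IsAdjointPair, transpose_mul, hΩ, hY]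
  noncomm_ring

variable [DecidableEq n]

theorem IsSkewAdjoint.commutator {M M' : Matrix n n R} (hM : Ω.IsSkewAdjoint M)
    (hM' : Ω.IsSkewAdjoint M') : Ω.IsSkewAdjoint (M * M' - M' * M) := by
  simpa [mem_skewAdjointMatricesSubmodule, Ring.lie_def] using
    isSkewAdjoint_bracket Ω ((mem_skewAdjointMatricesSubmodule Ω M).2 hM)
      ((mem_skewAdjointMatricesSubmodule Ω M').2 hM')

theorem isSkewAdjoint_inv_mul_of_transpose_eq_neg (hΩ : Ωᵀ = Ω) (hΩu : IsUnit Ω.det)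
    {Y : Matrix n n R} (hY : Yᵀ = -Y) : Ω.IsSkewAdjoint (Ω⁻¹ * Y) := by
  rw [Matrix.IsSkewAdjoint, IsAdjointPair, transpose_mul, transpose_nonsing_inv, hΩ, hY,
    mul_assoc, nonsing_inv_mul _ hΩu, mul_neg, mul_nonsing_inv_cancel_left _ _ hΩu]
  noncomm_ring

theorem IsSkewAdjoint.transpose_mul_inv (hΩ : Ωᵀ = Ω) (hΩu : IsUnit Ω.det) {M : Matrix n n R}
    (hM : Ω.IsSkewAdjoint M) : (M * Ω⁻¹)ᵀ = -(M * Ω⁻¹) :=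
  calc (M * Ω⁻¹)ᵀ = Ω⁻¹ * (Mᵀ * Ω) * Ω⁻¹ := by
        rw [transpose_mul, transpose_nonsing_inv, hΩ, mul_assoc,
          mul_nonsing_inv_cancel_right _ _ hΩu]
    _ = -(M * Ω⁻¹) := by
        rw [show Mᵀ * Ω = Ω * -M from hM, mul_neg, mul_neg, neg_mul,
          nonsing_inv_mul_cancel_left _ _ hΩu]

end Matrix

theorem transpose_eq_neg_of_hasDerivAt {𝕜 n : Type*} [NontriviallyNormedField 𝕜]
    {F : 𝕜 → Matrix n n 𝕜} {F' : Matrix n n 𝕜} {t : 𝕜} (hF : ∀ s, (F s)ᵀ = -F s)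
    (hF' : ∀ i j, HasDerivAt (fun s => F s i j) (F' i j) t) : F'ᵀ = -F' := by
  ext i j
  have hneg : (fun s => F s j i) = fun s => -F s i j := funext fun s => by
    simpa using congr($(hF s) i j)
  exact (hF' j i).unique (hneg ▸ (hF' i j).neg)

namespace SimpleGraph

section Flows

variable {ι : Type*} (G : SimpleGraph ι) [DecidableRel G.Adj]

def gradient : (ι → ℝ) →ₗ[ℝ] EuclideanSpace ℝ (ι × ι) where
  toFun p := WithLp.toLp 2 fun e => G.adjMatrix ℝ e.1 e.2 * (p e.1 - p e.2)
  map_add' p q := by ext e; simp only [Pi.add_apply, PiLp.add_apply]; ring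
  map_smul' r p := by
    ext e
    simp only [Pi.smul_apply, PiLp.smul_apply, smul_eq_mul, RingHom.id_apply]
    ring

def edgeRestrict (c : Matrix ι ι ℝ) : EuclideanSpace ℝ (ι × ι) :=
  WithLp.toLp 2 fun e => G.adjMatrix ℝ e.1 e.2 * c e.1 e.2

def skewFlow (v : EuclideanSpace ℝ (ι × ι)) : Matrix ι ι ℝ :=
  of fun k l => G.adjMatrix ℝ k l * (v (k, l) - v (l, k))

theorem transpose_skewFlow (v : EuclideanSpace ℝ (ι × ι)) : (G.skewFlow v)ᵀ = -G.skewFlow v := by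
  ext k l
  rw [transpose_apply, neg_apply]
  simp only [skewFlow, of_apply, G.isSymm_adjMatrix.apply k l]
  ring

theorem skewFlow_eq_zero_of_not_adj (v : EuclideanSpace ℝ (ι × ι)) {k l : ι} (h : ¬G.Adj k l) :
    G.skewFlow v k l = 0 := by
  simp [skewFlow, h]

variable [Fintype ι]

theorem sum_sum_adjMatrix_mul_swap (g : ι → ι → ℝ) :
    ∑ k, ∑ l, G.adjMatrix ℝ k l * g l k = ∑ k, ∑ l, G.adjMatrix ℝ k l * g k l := by
  rw [Finset.sum_comm]
  simp_rw [G.isSymm_adjMatrix.apply]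

theorem inner_gradient (p : ι → ℝ) (v : EuclideanSpace ℝ (ι × ι)) :
    inner ℝ (G.gradient p) v = (G.skewFlow v *ᵥ 1) ⬝ᵥ p := by
  have hswap := G.sum_sum_adjMatrix_mul_swap fun k l => v (k, l) * p l
  simp only [EuclideanSpace.inner_eq_star_dotProduct, dotProduct, Fintype.sum_prod_type, mulVec,
    gradient, skewFlow, LinearMap.coe_mk, AddHom.coe_mk, star_trivial, of_apply, Pi.one_apply,
    mul_one, Finset.sum_mul, mul_sub, sub_mul, Finset.sum_sub_distrib] at hswap ⊢
  simp only [mul_comm, mul_assoc, mul_left_comm] at hswap ⊢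
  linarith

theorem trace_mul_skewFlow {c : Matrix ι ι ℝ} (hc : cᵀ = -c) (v : EuclideanSpace ℝ (ι × ι)) :
    trace (c * G.skewFlow v) = -2 * inner ℝ v (G.edgeRestrict c) := by
  have hanti : ∀ k l, c l k = -c k l := fun k l => by simpa using congr($hc k l)
  have hswap : ∑ k, ∑ l, G.adjMatrix ℝ k l * (c k l * v (l, k))
      = -∑ k, ∑ l, G.adjMatrix ℝ k l * (c k l * v (k, l)) := by
    refine (G.sum_sum_adjMatrix_mul_swap fun k l => c l k * v (k, l)).trans ?_
    simp only [← Finset.sum_neg_distrib]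
    refine Finset.sum_congr rfl fun k _ => Finset.sum_congr rfl fun l _ => ?_
    rw [hanti]
    ring
  simp only [trace, diag, mul_apply, EuclideanSpace.inner_eq_star_dotProduct, dotProduct,
    Fintype.sum_prod_type, skewFlow, edgeRestrict, of_apply, star_trivial,
    G.isSymm_adjMatrix.apply, mul_sub, Finset.sum_sub_distrib]
  simp only [mul_comm, mul_assoc, mul_left_comm] at hswap ⊢
  linarith

theorem skewFlow_mulVec_one_eq_zero_of_mem_orthogonal {v : EuclideanSpace ℝ (ι × ι)}
    (hv : v ∈ (LinearMap.range G.gradient)ᗮ) : G.skewFlow v *ᵥ 1 = 0 := by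
  have := (Submodule.mem_orthogonal _ _).1 hv _ (LinearMap.mem_range_self _ (G.skewFlow v *ᵥ 1))
  rwa [inner_gradient, dotProduct_self_eq_zero] at this

end Flows

theorem exists_potential_of_trace_mul_eq_zero {ι : Type*} [Fintype ι] (G : SimpleGraph ι)
    {c : Matrix ι ι ℝ} (hc : cᵀ = -c)
    (h : ∀ f : Matrix ι ι ℝ, fᵀ = -f → (∀ i j, ¬G.Adj i j → f i j = 0) → f *ᵥ 1 = 0 →
      trace (c * f) = 0) :
    ∃ p : ι → ℝ, ∀ i j, G.Adj i j → c i j = p i - p j := by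
  classical
  have hc_mem : G.edgeRestrict c ∈ LinearMap.range G.gradient := by
    rw [← Submodule.orthogonal_orthogonal (LinearMap.range G.gradient)]
    intro v hv
    have := h _ (G.transpose_skewFlow v) (fun _ _ => G.skewFlow_eq_zero_of_not_adj v)
      (G.skewFlow_mulVec_one_eq_zero_of_mem_orthogonal hv)
    rw [G.trace_mul_skewFlow hc] at this
    linarith
  obtain ⟨p, hp⟩ := hc_mem
  refine ⟨p, fun i j hij => ?_⟩
  simpa [gradient, edgeRestrict, hij] using congr($hp (i, j)).symm

end SimpleGraph

theorem discrete_euler_equations_general (N : ℕ) (d : Fin N → ℝ) (hd : ∀ i, 0 < d i)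
    (G : SimpleGraph (Fin N))
    (A : ℝ → Matrix (Fin N) (Fin N) ℝ)
    (hAS : ∀ t, (A t)ᵀ * Matrix.diagonal d + Matrix.diagonal d * A t = 0 ∧
      A t *ᵥ (1 : Fin N → ℝ) = 0 ∧ ∀ i j, ¬G.Adj i j → A t i j = 0)
    (F F' : ℝ → Matrix (Fin N) (Fin N) ℝ)
    (hFanti : ∀ t, (F t)ᵀ = -(F t))
    (hFderiv : ∀ t i j, HasDerivAt (fun s => F s i j) (F' t i j) t)
    (hEL : ∀ t, ∀ B : Matrix (Fin N) (Fin N) ℝ,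
      Bᵀ * Matrix.diagonal d + Matrix.diagonal d * B = 0 →
      B *ᵥ (1 : Fin N → ℝ) = 0 →
      (∀ i j, ¬G.Adj i j → B i j = 0) →
      Matrix.trace ((F' t * Matrix.diagonal d
        + (A t * (F t * Matrix.diagonal d) - (F t * Matrix.diagonal d) * A t)) * B)
        = 0) :
    ∀ t, ∃ p : Fin N → ℝ, ∀ i j, G.Adj i j →
      (F' t + (A t * (F t * Matrix.diagonal d) - (F t * Matrix.diagonal d) * A t)
          * (Matrix.diagonal d)⁻¹) i j
        + (p j - p i) = 0 := by
  intro t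
  set Ω := diagonal d
  have hΩ : Ωᵀ = Ω := diagonal_transpose d
  have hΩu : IsUnit Ω.det := by
    rw [det_diagonal]
    exact (Finset.prod_pos fun i _ => hd i).ne'.isUnit
  set X := A t * (F t * Ω) - F t * Ω * A t
  have hX : Ω.IsSkewAdjoint X :=
    (isSkewAdjoint_iff_transpose_mul_add_mul_eq_zero.2 (hAS t).1).commutator
      (isSkewAdjoint_mul_of_transpose_eq_neg hΩ (hFanti t))
  have hC : (F' t + X * Ω⁻¹)ᵀ = -(F' t + X * Ω⁻¹) := by
    rw [transpose_add, transpose_eq_neg_of_hasDerivAt hFanti (hFderiv t),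
      hX.transpose_mul_inv hΩ hΩu, neg_add]
  obtain ⟨p, hp⟩ := G.exists_potential_of_trace_mul_eq_zero hC fun f hf hsupp hrow => by
    have hB := hEL t (Ω⁻¹ * f)
      (isSkewAdjoint_iff_transpose_mul_add_mul_eq_zero.1
        (isSkewAdjoint_inv_mul_of_transpose_eq_neg hΩ hΩu hf))
      (by rw [← mulVec_mulVec, hrow, mulVec_zero])
      (fun i j hij => by rw [inv_diagonal, diagonal_mul, hsupp i j hij, mul_zero])
    rwa [add_mul, mul_assoc, mul_nonsing_inv_cancel_left _ _ hΩu, ← mul_assoc, ← add_mul] at hB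
  exact ⟨p, fun i j hij => by rw [hp i j hij]; ring⟩

/-- **Discrete Euler equations with pressure.** Let `Ω` be a positive diagonal matrix
and `G` a connected adjacency graph. If the discrete velocity `A(t)` lies in the
constrained set `S` (`Ω`-antisymmetric, null-row, supported on adjacent pairs), `A♭(t)`
is a differentiable curve of antisymmetric matrices, and the discrete Euler–Lagrange
condition `Tr((Ȧ♭Ω + [A, A♭Ω])B) = 0` holds for every `B ∈ S`, then for every `t` there
is a discrete pressure `p` with `(Ȧ♭ + [A, A♭Ω]Ω⁻¹)_{ij} + (p_j − p_i) = 0` on edges. -/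
theorem discrete_euler_equations (N : ℕ) (d : Fin N → ℝ) (hd : ∀ i, 0 < d i)
    (G : SimpleGraph (Fin N)) (hG : G.Connected)
    (A : ℝ → Matrix (Fin N) (Fin N) ℝ)
    (hAS : ∀ t, (A t)ᵀ * Matrix.diagonal d + Matrix.diagonal d * A t = 0 ∧
      A t *ᵥ (1 : Fin N → ℝ) = 0 ∧ ∀ i j, ¬G.Adj i j → A t i j = 0)
    (F F' : ℝ → Matrix (Fin N) (Fin N) ℝ)
    (hFanti : ∀ t, (F t)ᵀ = -(F t))
    (hFderiv : ∀ t i j, HasDerivAt (fun s => F s i j) (F' t i j) t)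
    (hEL : ∀ t, ∀ B : Matrix (Fin N) (Fin N) ℝ,
      Bᵀ * Matrix.diagonal d + Matrix.diagonal d * B = 0 →
      B *ᵥ (1 : Fin N → ℝ) = 0 →
      (∀ i j, ¬G.Adj i j → B i j = 0) →
      Matrix.trace ((F' t * Matrix.diagonal d
        + (A t * (F t * Matrix.diagonal d) - (F t * Matrix.diagonal d) * A t)) * B)
        = 0) :
    ∀ t, ∃ p : Fin N → ℝ, ∀ i j, G.Adj i j →
      (F' t + (A t * (F t * Matrix.diagonal d) - (F t * Matrix.diagonal d) * A t)
          * (Matrix.diagonal d)⁻¹) i j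
        + (p j - p i) = 0 :=
  discrete_euler_equations_general N d hd G A hAS F F' hFanti hFderiv hEL
end
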